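/- arXiv:2306.15085 — 2 statements merged into one kernel-verified Lean document; each statement's English description precedes it below -/
import Mathlib

section
/- Let f be a polymatroid on a finite set E, let Z be a finite set disjoint from E, and let g be a polymatroid on E ∪ Z extending f that is an AK extension of f for a pair (X, Y) of subsets of E. Then g is a CI extension for the pair (X, Y) (that is, g(Z ∪ X) = g(X), g(Z ∪ Y) = g(Y), and g(X ∪ Z) + g(Y ∪ Z) = g(X ∪ Y ∪ Z) + g(Z)) if and only if g(Z ∪ Y) = g(Y). -/
/-! If `Z` adds nothing to `Y`, then by submodularity (and monotonicity, applied to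
`Y ⊆ (X ∪ Y) ∩ (Y ∪ Z)`) it adds nothing to `X ∪ Y` either. The AK identity for `X' = X`
then turns `g (X ∪ Y ∪ Z) = g (X ∪ Y)` into the modularity equation of a CI extension. -/

open Finset

/-- A polymatroid on a finite ground set `E`. -/
def IsPolymatroid {α : Type*} [DecidableEq α] (E : Finset α) (f : Finset α → ℝ) : Prop :=
  f ∅ = 0 ∧
  (∀ ⦃X Y : Finset α⦄, X ⊆ Y → Y ⊆ E → f X ≤ f Y) ∧
  (∀ ⦃X Y : Finset α⦄, X ⊆ E → Y ⊆ E → f (X ∪ Y) + f (X ∩ Y) ≤ f X + f Y)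

/-- Ahlswede–Körner extension condition for the pair `(X, Y)`. -/
def IsAKExtension {α : Type*} [DecidableEq α] (Z : Finset α) (g : Finset α → ℝ)
    (X Y : Finset α) : Prop :=
  g (Z ∪ X) = g X ∧ ∀ X' ⊆ X, g (X' ∪ Z) - g Z = g (X' ∪ Y) - g Y

namespace IsPolymatroid

variable {α : Type*} [DecidableEq α] {G : Finset α} {g : Finset α → ℝ}

theorem mono (hg : IsPolymatroid G g) {X Y : Finset α} (hXY : X ⊆ Y) (hY : Y ⊆ G) :
    g X ≤ g Y :=
  hg.2.1 hXY hY

theorem submodular (hg : IsPolymatroid G g) {X Y : Finset α} (hX : X ⊆ G) (hY : Y ⊆ G) :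
    g (X ∪ Y) + g (X ∩ Y) ≤ g X + g Y :=
  hg.2.2 hX hY

theorem apply_union_union_eq_of_apply_union_eq (hg : IsPolymatroid G g) {W Y Z : Finset α}
    (hW : W ⊆ G) (hY : Y ⊆ G) (hZ : Z ⊆ G) (h : g (Y ∪ Z) = g Y) :
    g (W ∪ Y ∪ Z) = g (W ∪ Y) := by
  have hWY : W ∪ Y ⊆ G := union_subset hW hY
  have hWYZ : W ∪ Y ∪ Z ⊆ G := union_subset hWY hZ
  have hsub := hg.submodular hWY (union_subset hY hZ)
  rw [show W ∪ Y ∪ (Y ∪ Z) = W ∪ Y ∪ Z by ext; simp only [mem_union]; tauto] at hsub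
  have hinter : g Y ≤ g ((W ∪ Y) ∩ (Y ∪ Z)) :=
    hg.mono (subset_inter subset_union_right subset_union_left)
      (inter_subset_left.trans hWY)
  have hmono : g (W ∪ Y) ≤ g (W ∪ Y ∪ Z) := hg.mono subset_union_left hWYZ
  linarith

end IsPolymatroid

theorem stmt_3_general {α : Type*} [DecidableEq α] (E Z : Finset α)
    (g : Finset α → ℝ) (hg : IsPolymatroid (E ∪ Z) g)
    (X Y : Finset α) (hXE : X ⊆ E) (hYE : Y ⊆ E)
    (hAK : IsAKExtension Z g X Y) :
    (g (Z ∪ X) = g X ∧ g (Z ∪ Y) = g Y ∧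
      g (X ∪ Z) + g (Y ∪ Z) = g (X ∪ Y ∪ Z) + g Z) ↔ g (Z ∪ Y) = g Y := by
  refine ⟨fun hCI => hCI.2.1, fun hZY => ⟨hAK.1, hZY, ?_⟩⟩
  have hYZ : g (Y ∪ Z) = g Y := by rwa [union_comm]
  have hXYZ : g (X ∪ Y ∪ Z) = g (X ∪ Y) :=
    hg.apply_union_union_eq_of_apply_union_eq (hXE.trans subset_union_left)
      (hYE.trans subset_union_left) subset_union_right hYZ
  have hX := hAK.2 X Subset.rfl
  linarith

/-- An AK extension `g` for `(X, Y)` is a CI extension for `(X, Y)`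
if and only if `g(Z ∪ Y) = g(Y)`. -/
theorem stmt_3 {α : Type*} [DecidableEq α] (E Z : Finset α) (hdisj : Disjoint E Z)
    (f g : Finset α → ℝ) (hf : IsPolymatroid E f) (hg : IsPolymatroid (E ∪ Z) g)
    (hext : ∀ X ⊆ E, g X = f X)
    (X Y : Finset α) (hXE : X ⊆ E) (hYE : Y ⊆ E)
    (hAK : IsAKExtension Z g X Y) :
    (g (Z ∪ X) = g X ∧ g (Z ∪ Y) = g Y ∧
      g (X ∪ Z) + g (Y ∪ Z) = g (X ∪ Y ∪ Z) + g Z) ↔ g (Z ∪ Y) = g Y :=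
  stmt_3_general E Z g hg X Y hXE hYE hAK
end

section
/- Let f be a polymatroid on a finite set E, let U ⊆ E and X, Y ⊆ E ∖ U, let Z be a finite set disjoint from E, and let g be a polymatroid on E ∪ Z extending f that is an AK extension of f for the pair (X ∪ U, Y ∪ U). Define h on subsets of (E ∪ Z) ∖ U by h(S) = g(S ∪ U) − g(U). Then h is a polymatroid on (E ∪ Z) ∖ U extending the contraction of f by U (i.e., h(S) = f(S ∪ U) − f(U) for S ⊆ E ∖ U), and h is an AK extension for the pair (X, Y): h(Z ∪ X) = h(X) and h(X′ ∪ Z) − h(Z) = h(X′ ∪ Y) − h(Y) for every X′ ⊆ X. -/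
open Finset

section Contraction

variable {α : Type*} [DecidableEq α]

def contract (g : Finset α → ℝ) (U : Finset α) (S : Finset α) : ℝ :=
  g (S ∪ U) - g U

theorem IsPolymatroid.contract {F U : Finset α} {g : Finset α → ℝ}
    (hg : IsPolymatroid F g) (hUF : U ⊆ F) : IsPolymatroid (F \ U) (contract g U) := by
  obtain ⟨-, hmono, hsub⟩ := hg
  have union_subset_of_sdiff {S : Finset α} (hS : S ⊆ F \ U) : S ∪ U ⊆ F :=
    union_subset (hS.trans sdiff_subset) hUF
  refine ⟨by simp [_root_.contract], fun A B hAB hB => ?_, fun A B hA hB => ?_⟩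
  · exact sub_le_sub_right (hmono (union_subset_union_left hAB) (union_subset_of_sdiff hB)) _
  · have := hsub (union_subset_of_sdiff hA) (union_subset_of_sdiff hB)
    rw [← union_union_distrib_right, ← inter_union_distrib_right] at this
    simp only [_root_.contract]
    linarith

theorem IsAKExtension.apply_union_eq {Z X Y X' : Finset α} {g : Finset α → ℝ}
    (hAK : IsAKExtension Z g X Y) (hX : X' ⊆ X) (hY : X' ⊆ Y) : g (X' ∪ Z) = g Z := by
  have := hAK.2 X' hX
  rw [union_eq_right.2 hY] at this
  linarith

theorem IsAKExtension.contract {Z X Y U : Finset α} {g : Finset α → ℝ}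
    (hAK : IsAKExtension Z g (X ∪ U) (Y ∪ U)) : IsAKExtension Z (contract g U) X Y := by
  have hUZ : g (U ∪ Z) = g Z := hAK.apply_union_eq subset_union_right subset_union_right
  refine ⟨?_, fun X' hX' => ?_⟩
  · simp only [_root_.contract, union_assoc, hAK.1]
  · have := hAK.2 (X' ∪ U) (union_subset_union_left hX')
    rw [union_right_comm, ← union_union_distrib_right] at this
    simp only [_root_.contract, union_comm Z U, hUZ]
    linarith

end Contraction

theorem stmt_6_general {α : Type*} [DecidableEq α] (E Z U : Finset α)
    (hUE : U ⊆ E)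
    (X Y : Finset α)
    (f g : Finset α → ℝ) (hg : IsPolymatroid (E ∪ Z) g)
    (hext : ∀ S ⊆ E, g S = f S)
    (hAK : IsAKExtension Z g (X ∪ U) (Y ∪ U))
    (h : Finset α → ℝ) (hh : ∀ S, h S = g (S ∪ U) - g U) :
    IsPolymatroid ((E ∪ Z) \ U) h ∧
    (∀ S ⊆ E \ U, h S = f (S ∪ U) - f U) ∧
    IsAKExtension Z h X Y := by
  obtain rfl : h = contract g U := funext hh
  refine ⟨hg.contract (hUE.trans subset_union_left), fun S hS => ?_, hAK.contract⟩
  rw [hh, hext _ (union_subset (hS.trans sdiff_subset) hUE), hext U hUE]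

/-- The Ahlswede–Körner property is preserved by contraction: if `g` is an AK extension
of `f` for the pair `(X ∪ U, Y ∪ U)`, then the contraction `h(S) = g(S ∪ U) − g(U)`
is a polymatroid extending the contraction of `f` by `U`, and it is an AK extension
for the pair `(X, Y)`. -/
theorem stmt_6 {α : Type*} [DecidableEq α] (E Z U : Finset α)
    (hUE : U ⊆ E) (hdisj : Disjoint E Z)
    (X Y : Finset α) (hXE : X ⊆ E \ U) (hYE : Y ⊆ E \ U)
    (f g : Finset α → ℝ) (hf : IsPolymatroid E f) (hg : IsPolymatroid (E ∪ Z) g)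
    (hext : ∀ S ⊆ E, g S = f S)
    (hAK : IsAKExtension Z g (X ∪ U) (Y ∪ U))
    (h : Finset α → ℝ) (hh : ∀ S, h S = g (S ∪ U) - g U) :
    IsPolymatroid ((E ∪ Z) \ U) h ∧
    (∀ S ⊆ E \ U, h S = f (S ∪ U) - f U) ∧
    IsAKExtension Z h X Y :=
  stmt_6_general E Z U hUE X Y f g hg hext hAK h hh
end
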